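/- Let W ⊆ E be a stable subspace such that ker(z) ⊆ W ⊆ im(z). Then z maps (z^{-1}W) ∩ W^⊥ linearly isomorphically onto W ∩ (zW)^⊥, and moreover C(zv) = C(v) for every v ∈ (z^{-1}W) ∩ W^⊥ (i.e. the maps z and C from (z^{-1}W) ∩ W^⊥ and the map C from W ∩ (zW)^⊥ to ℂ² form a commuting triangle). -/

import Mathlib

open scoped ComplexInnerProductSpace

noncomputable section

abbrev E (N : ℕ) := EuclideanSpace ℂ (Fin N ⊕ Fin N)

def zmap (N : ℕ) : E N →ₗ[ℂ] E N where
  toFun v := WithLp.toLp 2 fun i =>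
    match i with
    | Sum.inl j => if h : (j : ℕ) + 1 < N then v (Sum.inl ⟨(j : ℕ) + 1, h⟩) else 0
    | Sum.inr j => if h : (j : ℕ) + 1 < N then v (Sum.inr ⟨(j : ℕ) + 1, h⟩) else 0
  map_add' u v := by
    ext i
    rcases i with j | j <;> simp only [PiLp.add_apply, PiLp.toLp_apply] <;> split <;> simp
  map_smul' c v := by
    ext i
    rcases i with j | j <;> simp only [PiLp.smul_apply, PiLp.toLp_apply, RingHom.id_apply, smul_eq_mul] <;>
      split <;> simp

def Cmap (N : ℕ) : E N →ₗ[ℂ] EuclideanSpace ℂ (Fin 2) where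
  toFun v := WithLp.toLp 2 fun i => if i = 0 then ∑ j : Fin N, v (Sum.inl j) else ∑ j : Fin N, v (Sum.inr j)
  map_add' u v := by
    ext i
    by_cases h : i = (0 : Fin 2) <;> simp [h, PiLp.add_apply, Finset.sum_add_distrib]
  map_smul' c v := by
    ext i
    by_cases h : i = (0 : Fin 2) <;> simp [h, PiLp.smul_apply, Finset.mul_sum]

/-- `Ym N m` : complete flags `0 = L_0 ⊊ L_1 ⊊ … ⊊ L_m` of `z`-stable subspaces of `E`
with `dim L_j = j`.  A tuple `(L_1,…,L_m) ∈ Y_m` is encoded as the function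
`L : Fin (m+1) → Submodule ℂ (E N)` with the convention `L 0 = 0`. -/
def Ym (N m : ℕ) : Set (Fin (m + 1) → Submodule ℂ (E N)) :=
  {L | L 0 = ⊥ ∧ StrictMono L ∧ (∀ j : Fin (m + 1), Module.finrank ℂ (L j) = (j : ℕ)) ∧
    ∀ j : Fin (m + 1), (L j).map (zmap N) ≤ L j}

/-- The map `φ_m`, in coordinates: `φ_m(L)_j = C(L_{j+1} ∩ L_j^⊥)` (0-based `j`),
i.e. the tuple `(C(L_1), C(L_2 ∩ L_1^⊥), …, C(L_m ∩ L_{m-1}^⊥))`. -/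
def phiRaw (N m : ℕ) (L : Fin (m + 1) → Submodule ℂ (E N)) :
    Fin m → Submodule ℂ (EuclideanSpace ℂ (Fin 2)) :=
  fun j => ((L j.succ) ⊓ (L j.castSucc)ᗮ).map (Cmap N)

/-- `X_{m,i} = {(L_1,…,L_m) ∈ Y_m : L_{i+1} = z^{-1}(L_{i-1})}` (with `L_0 = 0`). -/
def Xmi (N m i : ℕ) : Set (Fin (m + 1) → Submodule ℂ (E N)) :=
  {L | L ∈ Ym N m ∧ ∀ (h : i + 1 < m + 1) (h' : i - 1 < m + 1),
    L ⟨i + 1, h⟩ = (L ⟨i - 1, h'⟩).comap (zmap N)}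

/-- `A_{m,i} = {(l_1,…,l_m) ∈ (ℙ¹)^m : l_{i+1} = l_i^⊥}`; a point of `(ℙ¹)^m` is encoded
as a tuple of rank-one subspaces of `ℂ²`, the line `l_k` sitting at 0-based index `k-1`. -/
def Ami (m i : ℕ) : Set (Fin m → Submodule ℂ (EuclideanSpace ℂ (Fin 2))) :=
  {l | (∀ j, Module.finrank ℂ (l j) = 1) ∧
    ∀ (h : i < m) (h' : i - 1 < m), l ⟨i, h⟩ = (l ⟨i - 1, h'⟩)ᗮ}

/-- `q_{m,i}(L_1,…,L_m) = (L_1,…,L_{i-1}, zL_{i+2},…,zL_m)`. -/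
def qRaw (N m i : ℕ) (hm : 2 ≤ m) (L : Fin (m + 1) → Submodule ℂ (E N)) :
    Fin (m - 2 + 1) → Submodule ℂ (E N) :=
  fun j =>
    if (j : ℕ) < i then L ⟨(j : ℕ), by have := j.isLt; omega⟩
    else (L ⟨(j : ℕ) + 2, by have := j.isLt; omega⟩).map (zmap N)

/-- The forgetful map `g_{m,i}(l_1,…,l_m) = (l_1,…,l_{i-1}, l_{i+2},…,l_m)`. -/
def gRaw (m i : ℕ) (l : Fin m → Submodule ℂ (EuclideanSpace ℂ (Fin 2))) :
    Fin (m - 2) → Submodule ℂ (EuclideanSpace ℂ (Fin 2)) :=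
  fun k =>
    if (k : ℕ) + 1 < i then l ⟨(k : ℕ), by have := k.isLt; omega⟩
    else l ⟨(k : ℕ) + 2, by have := k.isLt; omega⟩

/-- The involution `I_{2n}` of `(ℙ¹)^m`: `l_j ↦ l_j` for `j` odd, `l_j ↦ l_j^⊥` for `j` even
(the line `l_j` sits at 0-based index `j-1`). -/
def Imap (m : ℕ) (l : Fin m → Submodule ℂ (EuclideanSpace ℂ (Fin 2))) :
    Fin m → Submodule ℂ (EuclideanSpace ℂ (Fin 2)) :=
  fun k => if (k : ℕ) % 2 = 0 then l k else (l k)ᗮ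

/-- A crossingless matching of the `2n` points `{1,…,2n}`: a partition of `{1,…,2n}` into
`n` pairs (each pair recorded as `(i,j)` with `i < j`) such that there is no quadruple
`i < j < k < l` with `(i,k)` and `(j,l)` paired. -/
structure CrossinglessMatching (n : ℕ) where
  pairs : Finset (ℕ × ℕ)
  card_eq : pairs.card = n
  lt : ∀ p ∈ pairs, p.1 < p.2
  mem_range : ∀ p ∈ pairs, 1 ≤ p.1 ∧ p.2 ≤ 2 * n
  cover : ∀ k, 1 ≤ k → k ≤ 2 * n → ∃! p, p ∈ pairs ∧ (p.1 = k ∨ p.2 = k)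
  noncross : ∀ i j k l : ℕ, i < j → j < k → k < l → (i, k) ∈ pairs → (j, l) ∉ pairs

open Fin.NatCast in
/-- `{(L_1,…,L_m) ∈ Y_m : L_{s_a(j)} = z^{-d_a(j)} L_{j-1} for all j ∈ O_a}`, where for a
pair `(i,j)` of the matching, `s_a(i) = j`, `d_a(i) = (j-i+1)/2`, and `z^{-d}` is the
`d`-fold preimage under `z`. -/
def KaSet (N m : ℕ) (pairs : Finset (ℕ × ℕ)) : Set (Fin (m + 1) → Submodule ℂ (E N)) :=
  {L | L ∈ Ym N m ∧ ∀ p ∈ pairs,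
    L ((p.2 : Fin (m + 1))) =
      (L ((p.1 - 1 : ℕ) : Fin (m + 1))).comap ((zmap N) ^ ((p.2 - p.1 + 1) / 2))}

/-- `S_a = {(l_1,…,l_{2n}) ∈ (ℙ¹)^{2n} : l_{s_a(j)} = l_j ∀ j ∈ O_a}` (0-based indexing, so
`l_k` sits at index `k-1`). -/
def SaSet (m : ℕ) (pairs : Finset (ℕ × ℕ)) :
    Set (Fin m → Submodule ℂ (EuclideanSpace ℂ (Fin 2))) :=
  {l | (∀ j, Module.finrank ℂ (l j) = 1) ∧
    ∀ p ∈ pairs, ∀ (h2 : p.2 - 1 < m) (h1 : p.1 - 1 < m), l ⟨p.2 - 1, h2⟩ = l ⟨p.1 - 1, h1⟩}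

/-- `T_a = {(l_1,…,l_{2n}) ∈ (ℙ¹)^{2n} : l_{s_a(j)} = l_j^⊥ ∀ j ∈ O_a}`. -/
def TaSet (m : ℕ) (pairs : Finset (ℕ × ℕ)) :
    Set (Fin m → Submodule ℂ (EuclideanSpace ℂ (Fin 2))) :=
  {l | (∀ j, Module.finrank ℂ (l j) = 1) ∧
    ∀ p ∈ pairs, ∀ (h2 : p.2 - 1 < m) (h1 : p.1 - 1 < m), l ⟨p.2 - 1, h2⟩ = (l ⟨p.1 - 1, h1⟩)ᗮ}

/-! The shift `z` is a partial isometry: its kernel is spanned by `e₁, f₁`, and on the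
orthogonal complement of the kernel (the vectors with vanishing first coordinates) it preserves
inner products and the coordinate sums read by `C`. As `ker z ⊆ W`, the space `Wᗮ` lies in that
complement. Hence `z` is injective on `z⁻¹W ∩ Wᗮ` and maps it into `(zW)ᗮ`. Conversely, an element
`t` of `W ∩ (zW)ᗮ ⊆ im z` has a preimage `v ⊥ ker z`, and `⟪u, v⟫ = ⟪zu, t⟫ = 0` for `u ∈ W`
puts `v` in `Wᗮ`. -/

open scoped InnerProductSpace

section PartialIsometry

variable {𝕜 V : Type*} [RCLike 𝕜] [NormedAddCommGroup V] [InnerProductSpace 𝕜 V]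
  {f : V →ₗ[𝕜] V} {W : Submodule 𝕜 V}

theorem mapsTo_comap_inf_orthogonal
    (hf : ∀ u, ∀ v ∈ (LinearMap.ker f)ᗮ, ⟪f u, f v⟫_𝕜 = ⟪u, v⟫_𝕜)
    (hker : LinearMap.ker f ≤ W) :
    Set.MapsTo f (W.comap f ⊓ Wᗮ) (W ⊓ (W.map f)ᗮ) := by
  rintro v ⟨hvW, hvW'⟩
  refine ⟨hvW, (Submodule.mem_orthogonal _ _).mpr ?_⟩
  rintro _ ⟨u, hu, rfl⟩
  rw [hf u v (Submodule.orthogonal_le hker hvW')]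
  exact (Submodule.mem_orthogonal W v).mp hvW' u hu

theorem injOn_comap_inf_orthogonal (hker : LinearMap.ker f ≤ W) :
    Set.InjOn f (W.comap f ⊓ Wᗮ) :=
  LinearMap.injOn_of_disjoint_ker le_rfl
    ((W.orthogonal_disjoint.symm.mono_left inf_le_right).mono_right hker)

theorem surjOn_comap_inf_orthogonal [(LinearMap.ker f).HasOrthogonalProjection]
    (hf : ∀ u, ∀ v ∈ (LinearMap.ker f)ᗮ, ⟪f u, f v⟫_𝕜 = ⟪u, v⟫_𝕜)
    (hrange : W ≤ LinearMap.range f) :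
    Set.SurjOn f (W.comap f ⊓ Wᗮ) (W ⊓ (W.map f)ᗮ) := by
  rintro t ⟨htW, htW'⟩
  obtain ⟨v₀, rfl⟩ := hrange htW
  obtain ⟨k, hk, v, hv, rfl⟩ := (LinearMap.ker f).exists_add_mem_mem_orthogonal v₀
  rw [map_add, LinearMap.mem_ker.mp hk, zero_add] at htW htW' ⊢
  refine ⟨v, ⟨htW, (Submodule.mem_orthogonal W v).mpr fun u hu => ?_⟩, rfl⟩
  rw [← hf u v hv]
  exact (Submodule.mem_orthogonal _ _).mp htW' _ (Submodule.mem_map_of_mem hu)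

end PartialIsometry

theorem Fin.sum_dite_succ_lt_eq_sum {M : Type*} [AddCommMonoid M] {N : ℕ} (G : Fin N → M)
    (hG : ∀ j : Fin N, (j : ℕ) = 0 → G j = 0) :
    ∑ j : Fin N, (if h : (j : ℕ) + 1 < N then G ⟨j + 1, h⟩ else 0) = ∑ j, G j := by
  cases N with
  | zero => simp
  | succ n =>
    rw [Fin.sum_univ_castSucc, Fin.sum_univ_succ, hG 0 rfl, zero_add, dif_neg (by simp),
      add_zero]
    exact Finset.sum_congr rfl fun j _ => by rw [dif_pos (by simp)]; rfl

section zmap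

variable {N : ℕ}

theorem zmap_apply_inl (v : E N) (j : Fin N) :
    zmap N v (Sum.inl j) = if h : (j : ℕ) + 1 < N then v (Sum.inl ⟨j + 1, h⟩) else 0 := rfl

theorem zmap_apply_inr (v : E N) (j : Fin N) :
    zmap N v (Sum.inr j) = if h : (j : ℕ) + 1 < N then v (Sum.inr ⟨j + 1, h⟩) else 0 := rfl

theorem single_mem_ker_zmap {i : Fin N ⊕ Fin N} (hi : Sum.elim Fin.val Fin.val i = 0) (c : ℂ) :
    EuclideanSpace.single i c ∈ LinearMap.ker (zmap N) := by
  rw [LinearMap.mem_ker]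
  ext k
  rcases i with i | i <;> rcases k with k | k <;>
    simp only [zmap_apply_inl, zmap_apply_inr] <;> split <;>
    simp_all [Fin.ext_iff]

theorem apply_eq_zero_of_mem_orthogonal_ker_zmap {v : E N} (hv : v ∈ (LinearMap.ker (zmap N))ᗮ)
    {i : Fin N ⊕ Fin N} (hi : Sum.elim Fin.val Fin.val i = 0) : v i = 0 := by
  have h := (Submodule.mem_orthogonal _ v).mp hv _ (single_mem_ker_zmap hi 1)
  rwa [EuclideanSpace.inner_single_left, map_one, one_mul] at h

theorem inner_zmap_zmap (u : E N) {v : E N} (hv : v ∈ (LinearMap.ker (zmap N))ᗮ) :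
    ⟪zmap N u, zmap N v⟫ = ⟪u, v⟫ := by
  have hG (s : Fin N → Fin N ⊕ Fin N) (hs : ∀ j, Sum.elim Fin.val Fin.val (s j) = j)
      (j : Fin N) (hj : (j : ℕ) = 0) : ⟪u (s j), v (s j)⟫ = 0 := by
    rw [apply_eq_zero_of_mem_orthogonal_ker_zmap hv (by rw [hs, hj]), inner_zero_right]
  simp only [PiLp.inner_apply, Fintype.sum_sum_type]
  rw [← Fin.sum_dite_succ_lt_eq_sum _ (hG Sum.inl fun _ => rfl),
    ← Fin.sum_dite_succ_lt_eq_sum _ (hG Sum.inr fun _ => rfl)]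
  congr 1 <;> refine Finset.sum_congr rfl fun j _ => ?_ <;>
    simp only [zmap_apply_inl, zmap_apply_inr] <;> split <;> simp

theorem Cmap_zmap {v : E N} (hv : v ∈ (LinearMap.ker (zmap N))ᗮ) :
    Cmap N (zmap N v) = Cmap N v := by
  have hG (s : Fin N → Fin N ⊕ Fin N) (hs : ∀ j, Sum.elim Fin.val Fin.val (s j) = j)
      (j : Fin N) (hj : (j : ℕ) = 0) : v (s j) = 0 :=
    apply_eq_zero_of_mem_orthogonal_ker_zmap hv (by rw [hs, hj])
  ext i
  simp only [Cmap, LinearMap.coe_mk, AddHom.coe_mk, PiLp.toLp_apply, zmap_apply_inl,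
    zmap_apply_inr, Fin.sum_dite_succ_lt_eq_sum _ (hG Sum.inl fun _ => rfl),
    Fin.sum_dite_succ_lt_eq_sum _ (hG Sum.inr fun _ => rfl)]

end zmap

theorem zmap_bijOn_and_commutes_general (N : ℕ)
    (W : Submodule ℂ (E N))
    (hker : LinearMap.ker (zmap N) ≤ W) (him : W ≤ LinearMap.range (zmap N)) :
    Set.BijOn (zmap N) (↑(W.comap (zmap N) ⊓ Wᗮ) : Set (E N))
      (↑(W ⊓ (W.map (zmap N))ᗮ) : Set (E N)) ∧
    ∀ v ∈ W.comap (zmap N) ⊓ Wᗮ, Cmap N ((zmap N) v) = Cmap N v :=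
  ⟨⟨mapsTo_comap_inf_orthogonal (fun u _ => inner_zmap_zmap u) hker,
      injOn_comap_inf_orthogonal hker,
      surjOn_comap_inf_orthogonal (fun u _ => inner_zmap_zmap u) him⟩,
    fun _ hv => Cmap_zmap (Submodule.orthogonal_le hker hv.2)⟩

theorem zmap_bijOn_and_commutes (N : ℕ) (hN : 1 ≤ N)
    (W : Submodule ℂ (E N)) (hstab : W.map (zmap N) ≤ W)
    (hker : LinearMap.ker (zmap N) ≤ W) (him : W ≤ LinearMap.range (zmap N)) :
    Set.BijOn (zmap N) (↑(W.comap (zmap N) ⊓ Wᗮ) : Set (E N))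
      (↑(W ⊓ (W.map (zmap N))ᗮ) : Set (E N)) ∧
    ∀ v ∈ W.comap (zmap N) ⊓ Wᗮ, Cmap N ((zmap N) v) = Cmap N v :=
  zmap_bijOn_and_commutes_general N W hker him
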